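/- Let ξ, η ∈ Q±* be freely irreducible words of length n following the same pattern. Then there exists a word w ∈ X*₍λ_n₎ such that D_{λ_n, w}(ξ) = η, where D denotes dual mappings of the automaton B and λ_n is the least index with r_{λ_n} > 2n. In other words, the group generated by restrictions to Q±ⁿ of the dual mappings D_{i,x} with i ≥ λ_n acts transitively on the set of freely irreducible words of length n with a given pattern. -/

import Mathlib

/-- The four states `a, b, a⁻¹, b⁻¹` of the automaton `B`. -/
inductive Qpm
  | a | b | ai | bi
  deriving DecidableEq

open Qpm

/-- The `r`-cycle `σ = (1,2,…,r)` on `{1,…,r}`. -/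
def csigma (r x : ℕ) : ℕ := if x = r then 1 else x + 1

/-- The inverse of the `r`-cycle `σ`. -/
def csigmaInv (r x : ℕ) : ℕ := if x = 1 then r else x - 1

/-- The transposition `τ = (1,2)`. -/
def ctau (x : ℕ) : ℕ := if x = 1 then 2 else if x = 2 then 1 else x

/-- The transition function of the automaton `B`: states are fixed on letters
other than 1,2; on letter 1 it swaps `a ↔ b`; on letter 2 it swaps `a⁻¹ ↔ b⁻¹`. -/
def phiB (x : ℕ) (q : Qpm) : Qpm :=
  if x = 1 then
    (match q with
     | a => b
     | b => a
     | q => q)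
  else if x = 2 then
    (match q with
     | ai => bi
     | bi => ai
     | q => q)
  else q

/-- The output function of `B`: `σᵢ` at `a`, `σᵢ⁻¹` at `a⁻¹`, `τ` at `b, b⁻¹`. -/
def psiB (ri : ℕ) (q : Qpm) (x : ℕ) : ℕ :=
  match q with
  | a => csigma ri x
  | ai => csigmaInv ri x
  | _ => ctau x

/-- The dual mapping `D_{i,x}` of the automaton `B` (over `Xᵢ = {1,…,rᵢ}`). -/
def dualB (r : ℕ → ℕ) (i : ℕ) : ℕ → List Qpm → List Qpm
  | _, [] => []
  | x, q :: qs => phiB x q :: dualB r i (psiB (r i) q x) qs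

/-- `D_{i,w}`, the composition of dual mappings of `B` along the word `w`. -/
def dualWB (r : ℕ → ℕ) : ℕ → List ℕ → List Qpm → List Qpm
  | _, [], ξ => ξ
  | i, x :: xs, ξ => dualWB r (i + 1) xs (dualB r i x ξ)

/-- The formal inverse of a state. -/
def qinv : Qpm → Qpm
  | a => ai
  | ai => a
  | b => bi
  | bi => b

/-- The swap `a ↔ b`, `a⁻¹ ↔ b⁻¹` (the tilde operation). -/
def til : Qpm → Qpm
  | a => b
  | b => a
  | ai => bi
  | bi => ai

/-- The pattern symbol of a state: `true` stands for `*`, `false` for `*⁻¹`. -/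
def patt : Qpm → Bool
  | a => true
  | b => true
  | _ => false

/-- A word over `Q±` is freely irreducible if no two consecutive letters are
mutually inverse. -/
def FreelyIrred (ξ : List Qpm) : Prop := List.Chain' (fun p q => q ≠ qinv p) ξ

/-- A word over the changing alphabet `Xᵢ = {1,…,rᵢ}`, starting at index `i`. -/
def ValidB (r : ℕ → ℕ) : ℕ → List ℕ → Prop
  | _, [] => True
  | i, x :: xs => x ∈ Set.Icc 1 (r i) ∧ ValidB r (i + 1) xs

/-!
Read the letter `z ∈ ℤ` as its residue in `Xᵢ = {1, …, rᵢ}` (`toLetter`). A state moves the letter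
it reads by at most one, so as long as `rᵢ` is large compared to `|z|` and the length of the word,
`D_{i,z}` agrees with the dual mapping `dualZ z` of `B` over the alphabet `ℤ`, with `σ = (· + 1)`.
Since `r` is unbounded, and letters `n + 2` act trivially on words of length `n` at every level
`≥ λ_n`, it suffices to show that the involutions `dualZ z` act transitively.

This goes by induction on the length. A sequence of moves of the tail of `q :: ξ'` can be read
through the head (`liftHead`): it moves the tail in the same way and applies `til` to the head once
for every use of the letter `flipLetter !(patt q)`. If this parity is wrong, append a loop at the
target tail using that letter an odd number of times. Such a loop exists when the tail starts with
the pattern of `q`; otherwise free irreducibility forces the parity to be right.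
-/

lemma til_involutive : Function.Involutive til := by
  intro q; cases q <;> rfl

lemma qinv_involutive : Function.Involutive qinv := by
  intro q; cases q <;> rfl

lemma commute_til_qinv : Function.Commute til qinv := by
  intro q; cases q <;> rfl

@[simp] lemma patt_til (q : Qpm) : patt (til q) = patt q := by
  cases q <;> rfl

@[simp] lemma patt_iterate_til (k : ℕ) (q : Qpm) : patt (til^[k] q) = patt q := by
  induction k generalizing q with
  | zero => rfl
  | succ k ih => rw [Function.iterate_succ_apply, ih, patt_til]

lemma eq_or_eq_til_of_patt_eq {q q' : Qpm} (h : patt q = patt q') : q' = q ∨ q' = til q := by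
  cases q <;> cases q' <;> simp_all [patt, til]

lemma eq_til_qinv_of_patt_ne {q s : Qpm} (hp : patt s ≠ patt q) (hs : s ≠ qinv q) :
    s = til (qinv q) := by
  cases q <;> cases s <;> simp_all [patt, til, qinv]

def flipLetter (p : Bool) : ℤ := if p then 1 else 2

def phiZ (z : ℤ) (q : Qpm) : Qpm := if z = flipLetter (patt q) then til q else q

def psiZ : Qpm → Equiv.Perm ℤ
  | a => Equiv.addRight 1
  | ai => (Equiv.addRight 1).symm
  | b | bi => Equiv.swap 1 2

def dualZ : ℤ → List Qpm → List Qpm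
  | _, [] => []
  | z, q :: qs => phiZ z q :: dualZ (psiZ q z) qs

def dualWZ (zs : List ℤ) (ξ : List Qpm) : List Qpm := zs.foldl (fun ξ z => dualZ z ξ) ξ

@[simp] lemma patt_phiZ (z : ℤ) (q : Qpm) : patt (phiZ z q) = patt q := by
  unfold phiZ; split_ifs <;> simp

lemma phiZ_involutive (z : ℤ) : Function.Involutive (phiZ z) := by
  intro q
  unfold phiZ
  split_ifs with h₁ h₂ <;> simp_all [til_involutive q]

lemma psiZ_phiZ (z : ℤ) (q : Qpm) : psiZ (phiZ z q) z = psiZ q z := by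
  unfold phiZ
  split_ifs with h
  · cases q <;> simp_all [psiZ, til, flipLetter, patt]
  · rfl

lemma psiZ_flipLetter (q : Qpm) : psiZ q (flipLetter (patt q)) = flipLetter (!patt q) := by
  cases q <;> simp [psiZ, flipLetter, patt]

lemma natAbs_psiZ_le (q : Qpm) (z : ℤ) : (psiZ q z).natAbs ≤ z.natAbs + 1 := by
  cases q <;> simp [psiZ, Equiv.swap_apply_def] <;> (try split_ifs) <;> omega

lemma natAbs_psiZ_symm_le (q : Qpm) (z : ℤ) : ((psiZ q).symm z).natAbs ≤ z.natAbs + 1 := by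
  cases q <;> simp [psiZ, Equiv.swap_apply_def] <;> (try split_ifs) <;> omega

@[simp] lemma length_dualZ (z : ℤ) (ξ : List Qpm) : (dualZ z ξ).length = ξ.length := by
  induction ξ generalizing z <;> simp [dualZ, *]

lemma dualZ_involutive (z : ℤ) : Function.Involutive (dualZ z) := by
  intro ξ
  induction ξ generalizing z with
  | nil => rfl
  | cons q qs ih => simp only [dualZ, phiZ_involutive z q, psiZ_phiZ, ih]

@[simp] lemma dualWZ_nil (ξ : List Qpm) : dualWZ [] ξ = ξ := rfl

@[simp] lemma dualWZ_cons (z : ℤ) (zs : List ℤ) (ξ : List Qpm) :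
    dualWZ (z :: zs) ξ = dualWZ zs (dualZ z ξ) := rfl

lemma dualWZ_append (zs zs' : List ℤ) (ξ : List Qpm) :
    dualWZ (zs ++ zs') ξ = dualWZ zs' (dualWZ zs ξ) :=
  List.foldl_append

lemma dualWZ_reverse_dualWZ (zs : List ℤ) (ξ : List Qpm) : dualWZ zs.reverse (dualWZ zs ξ) = ξ := by
  induction zs generalizing ξ with
  | nil => rfl
  | cons z zs ih =>
    rw [List.reverse_cons, dualWZ_append, dualWZ_cons z zs, ih]
    exact dualZ_involutive z ξ

@[simp] lemma length_dualWZ (zs : List ℤ) (ξ : List Qpm) : (dualWZ zs ξ).length = ξ.length := by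
  induction zs generalizing ξ <;> simp [*]

def liftHead : Qpm → List ℤ → List ℤ
  | _, [] => []
  | q, z :: zs => (psiZ q).symm z :: liftHead (phiZ ((psiZ q).symm z) q) zs

lemma natAbs_le_of_mem_liftHead {K : ℕ} {q : Qpm} {zs : List ℤ}
    (h : ∀ z ∈ zs, z.natAbs ≤ K) : ∀ y ∈ liftHead q zs, y.natAbs ≤ K + 1 := by
  induction zs generalizing q with
  | nil => simp [liftHead]
  | cons z zs ih =>
    simp only [liftHead, List.mem_cons, forall_eq_or_imp]
    exact ⟨(natAbs_psiZ_symm_le q z).trans (Nat.add_le_add_right (h z List.mem_cons_self) 1),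
      ih fun w hw => h w (List.mem_cons_of_mem z hw)⟩

lemma dualWZ_liftHead (q : Qpm) (zs : List ℤ) (t : List Qpm) :
    dualWZ (liftHead q zs) (q :: t) =
      til^[zs.count (flipLetter !(patt q))] q :: dualWZ zs t := by
  induction zs generalizing q t with
  | nil => rfl
  | cons z zs ih =>
    rw [liftHead, dualWZ_cons, dualZ, Equiv.apply_symm_apply, ih, patt_phiZ, dualWZ_cons,
      List.count_cons]
    congr 1
    by_cases hz : z = flipLetter !(patt q)
    · have hx : (psiZ q).symm z = flipLetter (patt q) := by
        rw [hz, ← psiZ_flipLetter, Equiv.symm_apply_apply]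
      rw [phiZ, if_pos hx]
      simp [hz, Function.iterate_succ_apply]
    · have hx : (psiZ q).symm z ≠ flipLetter (patt q) := fun hx =>
        hz (by rw [← psiZ_flipLetter, ← hx, Equiv.apply_symm_apply])
      rw [phiZ, if_neg hx]
      simp [hz]

lemma exists_dualWZ_cons_eq (zs : List ℤ) (s : Qpm) (t : List Qpm) :
    ∃ t', dualWZ zs (s :: t) = til^[zs.count (flipLetter (patt s))] s :: t' := by
  induction zs generalizing s t with
  | nil => exact ⟨t, rfl⟩
  | cons z zs ih =>
    obtain ⟨t', ht'⟩ := ih (phiZ z s) (dualZ (psiZ s z) t)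
    refine ⟨t', ?_⟩
    rw [dualWZ_cons, dualZ, ht', patt_phiZ, List.count_cons]
    congr 1
    by_cases hz : z = flipLetter (patt s) <;> simp [phiZ, hz, Function.iterate_succ_apply]

/-- Reading a letter `z ≥ 3`, the states `a` and `b⁻¹` are fixed and pass on a letter `≥ 3` again;
likewise `b` and `a⁻¹` for `z ≤ 0`. So `canonicalWord p` is fixed by all these letters. -/
def canonicalLetter : Bool → Bool → Qpm
  | true, true => a
  | true, false => bi
  | false, true => b
  | false, false => ai

def canonicalWord (p : Bool) (ps : List Bool) : List Qpm := ps.map (canonicalLetter p)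

lemma map_patt_canonicalWord (p : Bool) (ps : List Bool) : (canonicalWord p ps).map patt = ps := by
  have : patt ∘ canonicalLetter p = id := by funext b; cases p <;> cases b <;> rfl
  rw [canonicalWord, List.map_map, this, List.map_id]

lemma freelyIrred_canonicalWord (p : Bool) (ps : List Bool) : FreelyIrred (canonicalWord p ps) := by
  refine List.isChain_map _ |>.mpr (List.isChain_iff_getElem.mpr fun i _ => ?_)
  cases p <;> cases ps[i] <;> cases ps[i + 1] <;> simp [canonicalLetter, qinv]

lemma dualZ_canonicalWord_true {z : ℤ} (hz : 3 ≤ z) (ps : List Bool) :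
    dualZ z (canonicalWord true ps) = canonicalWord true ps := by
  induction ps generalizing z with
  | nil => rfl
  | cons b ps ih =>
    cases b <;> simp [canonicalWord, dualZ, canonicalLetter, phiZ, flipLetter, patt, psiZ,
      Equiv.swap_apply_def] at ih ⊢ <;> grind

lemma dualZ_canonicalWord_false {z : ℤ} (hz : z ≤ 0) (ps : List Bool) :
    dualZ z (canonicalWord false ps) = canonicalWord false ps := by
  induction ps generalizing z with
  | nil => rfl
  | cons b ps ih =>
    cases b <;> simp [canonicalWord, dualZ, canonicalLetter, phiZ, flipLetter, patt, psiZ,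
      Equiv.swap_apply_def] at ih ⊢ <;> grind

lemma dualZ_flipLetter_canonicalWord (p : Bool) {ps : List Bool} (hps : ∀ b ∈ ps.head?, b = p) :
    dualZ (flipLetter !p) (canonicalWord p ps) = canonicalWord p ps := by
  rcases ps with _ | ⟨b, ps⟩
  · rfl
  obtain rfl : b = p := hps b rfl
  cases b
  · exact congrArg _ (dualZ_canonicalWord_false le_rfl ps)
  · exact congrArg _ (dualZ_canonicalWord_true le_rfl ps)

def DualZTransitive (n : ℕ) : Prop :=
  ∀ ξ η : List Qpm, ξ.length = n → η.length = n → FreelyIrred ξ → FreelyIrred η →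
    ξ.map patt = η.map patt → ∃ zs : List ℤ, (∀ z ∈ zs, z.natAbs ≤ n + 2) ∧ dualWZ zs ξ = η

/-- Move `η` to the canonical word, which `flipLetter !p` fixes, apply that letter, move back. -/
lemma DualZTransitive.exists_odd_loop {n : ℕ} (h : DualZTransitive n) {p : Bool}
    {η : List Qpm} (hlen : η.length = n) (hirr : FreelyIrred η)
    (hp : ∀ b ∈ (η.map patt).head?, b = p) :
    ∃ zs : List ℤ, (∀ z ∈ zs, z.natAbs ≤ n + 2) ∧ Odd (zs.count (flipLetter !p)) ∧
      dualWZ zs η = η := by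
  obtain ⟨P, hPbound, hP⟩ := h η (canonicalWord p (η.map patt)) hlen
    (by simp [canonicalWord, hlen]) hirr (freelyIrred_canonicalWord _ _)
    (map_patt_canonicalWord _ _).symm
  refine ⟨P ++ flipLetter (!p) :: P.reverse, ?_, ?_, ?_⟩
  · simp only [List.mem_append, List.mem_cons, List.mem_reverse]
    rintro z (hz | rfl | hz)
    · exact hPbound z hz
    · cases p <;> simp [flipLetter]
    · exact hPbound z hz
  · rw [List.count_append, List.count_cons_self, List.count_reverse]
    exact ⟨P.count (flipLetter !p), by ring⟩
  · rw [dualWZ_append, hP, dualWZ_cons, dualZ_flipLetter_canonicalWord p hp, ← hP,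
      dualWZ_reverse_dualWZ]

/-- Free irreducibility forces the second letters of both words to be `til (qinv ·)` of their
heads. -/
lemma iterate_til_eq_of_patt_ne {q q' s : Qpm} {rest η' : List Qpm} {zs : List ℤ}
    (hξ : FreelyIrred (q :: s :: rest)) (hη : FreelyIrred (q' :: η')) (hq : patt q' = patt q)
    (hs : patt s ≠ patt q) (hzs : dualWZ zs (s :: rest) = η') :
    til^[zs.count (flipLetter !(patt q))] q = q' := by
  obtain ⟨t', ht'⟩ := exists_dualWZ_cons_eq zs s rest
  rw [hzs, Bool.eq_not_iff.mpr hs] at ht'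
  subst ht'
  have hs_eq : s = til (qinv q) := eq_til_qinv_of_patt_ne hs (List.isChain_cons_cons.mp hξ).1
  have hs' : til^[zs.count (flipLetter !(patt q))] s = til (qinv q') :=
    eq_til_qinv_of_patt_ne (by simpa [hq] using hs) (List.isChain_cons_cons.mp hη).1
  apply qinv_involutive.injective
  apply til_involutive.injective
  rw [← hs', hs_eq, ← Function.iterate_succ_apply, Function.iterate_succ_apply',
    (commute_til_qinv.iterate_left _).eq]

lemma DualZTransitive.succ {n : ℕ} (h : DualZTransitive n) : DualZTransitive (n + 1) := by
  rintro (_ | ⟨q, ξ'⟩) (_ | ⟨q', η'⟩) hξ hη hirrξ hirrη hpatt <;>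
    simp only [List.length_nil, List.length_cons, Nat.add_right_cancel_iff] at hξ hη <;>
    try omega
  simp only [List.map_cons, List.cons.injEq] at hpatt
  obtain ⟨hq, hpatt'⟩ := hpatt
  obtain ⟨zs, hzs, hmove⟩ := h ξ' η' hξ hη hirrξ.tail hirrη.tail hpatt'
  by_cases hc : til^[zs.count (flipLetter !(patt q))] q = q'
  · exact ⟨liftHead q zs, natAbs_le_of_mem_liftHead hzs, by rw [dualWZ_liftHead, hmove, hc]⟩
  have hhead : ∀ b ∈ (ξ'.map patt).head?, b = patt q := by
    rcases ξ' with _ | ⟨s, rest⟩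
    · simp
    rintro _ ⟨⟩
    by_contra hs
    exact hc (iterate_til_eq_of_patt_ne hirrξ hirrη hq.symm hs hmove)
  obtain ⟨P, hPbound, hPodd, hP⟩ := h.exists_odd_loop hη hirrη.tail (hpatt' ▸ hhead)
  refine ⟨liftHead q (zs ++ P), natAbs_le_of_mem_liftHead ?_, ?_⟩
  · simpa only [List.mem_append, or_imp, forall_and] using ⟨hzs, hPbound⟩
  have hq' : q' = til (til^[zs.count (flipLetter !(patt q))] q) :=
    (eq_or_eq_til_of_patt_eq (by simpa using hq)).resolve_left (Ne.symm hc)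
  rw [dualWZ_liftHead, dualWZ_append, hmove, hP, List.count_append, add_comm,
    Function.iterate_add_apply, til_involutive.iterate_odd hPodd, hq']

lemma dualZTransitive (n : ℕ) : DualZTransitive n := by
  induction n with
  | zero =>
    intro ξ η hξ hη _ _ _
    rw [List.length_eq_zero_iff] at hξ hη
    exact ⟨[], by simp, by rw [hξ, hη]; rfl⟩
  | succ n ih => exact ih.succ

def toLetter (R : ℕ) (z : ℤ) : ℕ := if 0 < z then z.toNat else (R + z).toNat

lemma toLetter_mem_Icc {R : ℕ} {z : ℤ} (h : z.natAbs + 3 ≤ R) : toLetter R z ∈ Set.Icc 1 R := by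
  unfold toLetter; constructor <;> split_ifs <;> omega

lemma phiB_eq_phiZ (x : ℕ) (q : Qpm) : phiB x q = phiZ x q := by
  unfold phiB phiZ
  cases q <;> simp [flipLetter, patt, til] <;> split_ifs <;> first | rfl | omega

lemma phiB_toLetter {R : ℕ} {z : ℤ} (h : z.natAbs + 3 ≤ R) (q : Qpm) :
    phiB (toLetter R z) q = phiZ z q := by
  rw [phiB_eq_phiZ]
  unfold phiZ toLetter
  cases q <;> simp only [flipLetter, patt] <;> split_ifs <;> first | rfl | omega

lemma psiB_toLetter {R : ℕ} {z : ℤ} (h : z.natAbs + 3 ≤ R) (q : Qpm) :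
    psiB R q (toLetter R z) = toLetter R (psiZ q z) := by
  cases q <;> simp only [psiB, psiZ, csigma, csigmaInv, ctau, toLetter, Equiv.coe_addRight,
    Equiv.addRight_symm, Equiv.swap_apply_def] <;> grind

lemma dualB_toLetter (r : ℕ → ℕ) (i : ℕ) {z : ℤ} {w : List Qpm}
    (h : z.natAbs + w.length + 3 ≤ r i) : dualB r i (toLetter (r i) z) w = dualZ z w := by
  induction w generalizing z with
  | nil => rfl
  | cons q qs ih =>
    simp only [List.length_cons] at h
    rw [dualB, dualZ, phiB_toLetter (by omega), psiB_toLetter (by omega),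
      ih (by have := natAbs_psiZ_le q z; omega)]

lemma phiB_of_three_le {x : ℕ} (hx : 3 ≤ x) (q : Qpm) : phiB x q = q := by
  unfold phiB; rw [if_neg (by omega), if_neg (by omega)]

lemma dualB_eq_self {r : ℕ → ℕ} {i : ℕ} :
    ∀ {w : List Qpm} {x : ℕ}, w.length + 2 ≤ x → x + w.length ≤ r i + 1 → dualB r i x w = w
  | [], _, _, _ => rfl
  -- `x = r i` is possible here; `σ` would wrap it around to `1`, but no state reads it
  | [q], _, h₁, _ => by simp [dualB, phiB_of_three_le h₁]
  | q :: p :: ps, x, h₁, h₂ => by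
    simp only [List.length_cons] at h₁ h₂
    have hpsi : x - 1 ≤ psiB (r i) q x ∧ psiB (r i) q x ≤ x + 1 := by
      cases q <;> simp only [psiB, csigma, csigmaInv, ctau] <;> split_ifs <;> omega
    rw [dualB, phiB_of_three_le (by omega), dualB_eq_self (by simpa using by omega)
      (by simpa using by omega)]

lemma dualWB_append (r : ℕ → ℕ) (u v : List ℕ) (i : ℕ) (ξ : List Qpm) :
    dualWB r i (u ++ v) ξ = dualWB r (i + u.length) v (dualWB r i u ξ) := by
  induction u generalizing i ξ with
  | nil => rfl
  | cons x u ih =>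
    rw [List.cons_append, dualWB, dualWB, ih, List.length_cons, add_assoc, add_comm 1]

lemma ValidB.append {r : ℕ → ℕ} {u v : List ℕ} {i : ℕ} (hu : ValidB r i u)
    (hv : ValidB r (i + u.length) v) : ValidB r i (u ++ v) := by
  induction u generalizing i with
  | nil => exact hv
  | cons x u ih =>
    refine ⟨hu.1, ih hu.2 ?_⟩
    rwa [List.length_cons, ← add_assoc, add_right_comm] at hv

lemma dualWB_replicate {r : ℕ → ℕ} {n i : ℕ} (hr : ∀ t, i ≤ t → 2 * n + 1 ≤ r t) (m : ℕ)
    {ξ : List Qpm} (hξ : ξ.length = n) : dualWB r i (List.replicate m (n + 2)) ξ = ξ := by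
  induction m generalizing i with
  | zero => rfl
  | succ m ih =>
    rw [List.replicate_succ, dualWB, dualB_eq_self (by omega) (by have := hr i le_rfl; omega),
      ih fun t ht => hr t (by omega)]

lemma validB_replicate {r : ℕ → ℕ} {n i : ℕ} (hn : 0 < n) (hr : ∀ t, i ≤ t → 2 * n + 1 ≤ r t)
    (m : ℕ) : ValidB r i (List.replicate m (n + 2)) := by
  induction m generalizing i with
  | zero => trivial
  | succ m ih =>
    exact ⟨⟨by omega, by have := hr i le_rfl; omega⟩, ih fun t ht => hr t (by omega)⟩

def toLetters (r : ℕ → ℕ) : ℕ → List ℤ → List ℕ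
  | _, [] => []
  | i, z :: zs => toLetter (r i) z :: toLetters r (i + 1) zs

lemma dualWB_toLetters {r : ℕ → ℕ} {n K i : ℕ} (hr : ∀ t, i ≤ t → K + n + 3 ≤ r t)
    {zs : List ℤ} (hzs : ∀ z ∈ zs, z.natAbs ≤ K) {ξ : List Qpm} (hξ : ξ.length = n) :
    dualWB r i (toLetters r i zs) ξ = dualWZ zs ξ := by
  induction zs generalizing i ξ with
  | nil => rfl
  | cons z zs ih =>
    have hz := hzs z List.mem_cons_self
    rw [toLetters, dualWB, dualB_toLetter r i (by have := hr i le_rfl; omega), dualWZ_cons,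
      ih (fun t ht => hr t (by omega)) (fun y hy => hzs y (List.mem_cons_of_mem z hy))
        (by rw [length_dualZ, hξ])]

lemma validB_toLetters {r : ℕ → ℕ} {K i : ℕ} (hr : ∀ t, i ≤ t → K + 3 ≤ r t)
    {zs : List ℤ} (hzs : ∀ z ∈ zs, z.natAbs ≤ K) : ValidB r i (toLetters r i zs) := by
  induction zs generalizing i with
  | nil => trivial
  | cons z zs ih =>
    have hz := hzs z List.mem_cons_self
    exact ⟨toLetter_mem_Icc (by have := hr i le_rfl; omega),
      ih (fun t ht => hr t (by omega)) fun y hy => hzs y (List.mem_cons_of_mem z hy)⟩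

lemma exists_validB_dualWB_eq_dualWZ {r : ℕ → ℕ} (hmono : Monotone r)
    (hunb : ∀ N, ∃ i, N < r i) {n i : ℕ} (hr : 2 * n < r i) {ξ : List Qpm} (hξ : ξ.length = n)
    {zs : List ℤ} (hzs : ∀ z ∈ zs, z.natAbs ≤ n + 2) :
    ∃ w, ValidB r i w ∧ dualWB r i w ξ = dualWZ zs ξ := by
  obtain rfl | hn := n.eq_zero_or_pos
  · obtain rfl := List.length_eq_zero_iff.mp hξ
    exact ⟨[], trivial, (List.length_eq_zero_iff.mp (length_dualWZ zs [])).symm⟩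
  obtain ⟨i₁, hi₁⟩ := hunb (2 * n + 4)
  have hpad : ∀ t, i ≤ t → 2 * n + 1 ≤ r t := fun t ht => by have := hmono ht; omega
  have hlarge : ∀ t, max i i₁ ≤ t → n + 2 + n + 3 ≤ r t := fun t ht => by
    have := hmono ((le_max_right i i₁).trans ht); omega
  have hidx : i + (max i i₁ - i) = max i i₁ := by omega
  refine ⟨List.replicate (max i i₁ - i) (n + 2) ++ toLetters r (max i i₁) zs,
    (validB_replicate hn hpad _).append ?_, ?_⟩
  · rw [List.length_replicate, hidx]
    exact validB_toLetters (fun t ht => by have := hlarge t ht; omega) hzs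
  · rw [dualWB_append, List.length_replicate, dualWB_replicate hpad _ hξ, hidx,
      dualWB_toLetters hlarge hzs hξ]

theorem dual_action_transitive_on_irreducible_words_general
    (r : ℕ → ℕ) (hmono : Monotone r)
    (hunb : ∀ N, ∃ i, N < r i)
    (L : ℕ → ℕ) (hL : ∀ n, 2 * n < r (L n) ∧ ∀ j < L n, r j ≤ 2 * n) :
    ∀ (n : ℕ) (ξ η : List Qpm), ξ.length = n → η.length = n →
      FreelyIrred ξ → FreelyIrred η → ξ.map patt = η.map patt →
      ∃ w : List ℕ, ValidB r (L n) w ∧ dualWB r (L n) w ξ = η := by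
  intro n ξ η hξ hη hirrξ hirrη hpatt
  obtain ⟨zs, hzs, rfl⟩ := dualZTransitive n ξ η hξ hη hirrξ hirrη hpatt
  exact exists_validB_dualWB_eq_dualWZ hmono hunb (hL n).1 hξ hzs

/-- the dual mappings of `B` starting at level `λ_n` act
transitively on freely irreducible words of length `n` with a given pattern:
for freely irreducible `ξ, η` of length `n` with the same pattern there is a
word `w ∈ X*₍λ_n₎` with `D_{λ_n,w}(ξ) = η`. -/
theorem dual_action_transitive_on_irreducible_words
    (r : ℕ → ℕ) (hmono : Monotone r) (hge : ∀ i, 2 ≤ r i)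
    (hunb : ∀ N, ∃ i, N < r i)
    (L : ℕ → ℕ) (hL : ∀ n, 2 * n < r (L n) ∧ ∀ j < L n, r j ≤ 2 * n) :
    ∀ (n : ℕ) (ξ η : List Qpm), ξ.length = n → η.length = n →
      FreelyIrred ξ → FreelyIrred η → ξ.map patt = η.map patt →
      ∃ w : List ℕ, ValidB r (L n) w ∧ dualWB r (L n) w ξ = η :=
  dual_action_transitive_on_irreducible_words_general r hmono hunb L hL
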